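/- arXiv:1810.05633 — 4 statements merged into one kernel-verified Lean document; each statement's English description precedes it below -/
import Mathlib

section
/- Let F(x) = x^4/4 on ℝ and let the iterates be generated by gradient descent x_{k+1} = x_k − α_k x_k^3 with positive stepsizes satisfying α_{k+1} ≥ α_k/4 for all k. If the initial iterate satisfies |x_1| ≥ √(3/α_1), then |x_{k+1}| ≥ 2|x_k| for all k ∈ ℕ, and consequently |x_k| ≥ 2^{k−1}|x_1| for all k, so the iterates diverge exponentially. -/
/-- Divergence of gradient descent on `F(x) = x⁴/4` (Example: divergence for non-quadratics).
Gradient descent `x_{k+1} = x_k - α_k x_k³` with positive stepsizes satisfying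
`α_{k+1} ≥ α_k / 4` diverges exponentially when `|x₁| ≥ √(3/α₁)`. -/
theorem stmt0 (α : ℕ → ℝ) (x : ℕ → ℝ)
    (hαpos : ∀ k, 0 < α k)
    (hαrec : ∀ k, α k / 4 ≤ α (k + 1))
    (hiter : ∀ k, x (k + 1) = x k - α k * x k ^ 3)
    (hinit : Real.sqrt (3 / α 1) ≤ |x 1|) :
    (∀ k, 1 ≤ k → 2 * |x k| ≤ |x (k + 1)|) ∧
      (∀ k, 1 ≤ k → (2 : ℝ) ^ (k - 1) * |x 1| ≤ |x k|) := by
  -- invariant: 3 ≤ α k * x k ^ 2 for k ≥ 1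
  have hinv1 : 3 ≤ α 1 * x 1 ^ 2 := by
    have h1 : 0 < α 1 := hαpos 1
    have h2 : Real.sqrt (3 / α 1) ^ 2 ≤ |x 1| ^ 2 := by
      apply pow_le_pow_left₀ (Real.sqrt_nonneg _) hinit
    rw [Real.sq_sqrt (by positivity)] at h2
    rw [sq_abs] at h2
    have := (div_le_iff₀ h1).mp (by linarith [h2] : 3 / α 1 ≤ x 1 ^ 2)
    linarith [this]
  have step : ∀ k, 3 ≤ α k * x k ^ 2 →
      2 * |x k| ≤ |x (k + 1)| ∧ 3 ≤ α (k + 1) * x (k + 1) ^ 2 := by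
    intro k hk
    have hα := hαpos k
    have hα' := hαrec k
    have hα1 := hαpos (k + 1)
    have hx : x (k + 1) = x k * (1 - α k * x k ^ 2) := by
      rw [hiter k]; ring
    have habs : |x (k + 1)| = |x k| * |1 - α k * x k ^ 2| := by
      rw [hx, abs_mul]
    have h2 : (2 : ℝ) ≤ |1 - α k * x k ^ 2| := by
      rw [abs_of_nonpos (by linarith)]; linarith
    have hstep : 2 * |x k| ≤ |x (k + 1)| := by
      rw [habs]
      calc 2 * |x k| = |x k| * 2 := by ring
        _ ≤ |x k| * |1 - α k * x k ^ 2| :=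
          mul_le_mul_of_nonneg_left h2 (abs_nonneg _)
    refine ⟨hstep, ?_⟩
    have hsq : 4 * x k ^ 2 ≤ x (k + 1) ^ 2 := by
      have := mul_self_le_mul_self (by positivity) hstep
      nlinarith [sq_abs (x k), sq_abs (x (k + 1))]
    calc (3 : ℝ) ≤ α k * x k ^ 2 := hk
      _ = (α k / 4) * (4 * x k ^ 2) := by ring
      _ ≤ α (k + 1) * x (k + 1) ^ 2 := by
          apply mul_le_mul hα' hsq (by positivity) (le_of_lt hα1)
  have main : ∀ k, 1 ≤ k → 3 ≤ α k * x k ^ 2 := by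
    intro k hk
    induction k with
    | zero => omega
    | succ n ih =>
      rcases Nat.eq_or_lt_of_le hk with h | h
      · rw [← h]; exact hinv1
      · exact (step n (ih (by omega))).2
  have part1 : ∀ k, 1 ≤ k → 2 * |x k| ≤ |x (k + 1)| := fun k hk =>
    (step k (main k hk)).1
  refine ⟨part1, ?_⟩
  intro k hk
  induction k with
  | zero => omega
  | succ n ih =>
    rcases Nat.eq_or_lt_of_le hk with h | h
    · rw [← h]; simp
    · have hn : 1 ≤ n := by omega
      have h1 := ih hn
      have h2 := part1 n hn
      have hpow : (2 : ℝ) ^ (n + 1 - 1) = 2 * 2 ^ (n - 1) := by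
        rw [show n + 1 - 1 = (n - 1) + 1 by omega, pow_succ]; ring
      rw [hpow]
      calc 2 * 2 ^ (n - 1) * |x 1| = 2 * (2 ^ (n - 1) * |x 1|) := by ring
        _ ≤ 2 * |x n| := by linarith
        _ ≤ |x (n + 1)| := h2
end

section
/- Let f(·;s) be convex and subdifferentiable on a closed convex set X ⊆ ℝⁿ and let f_{x₀}(·;s) be a model satisfying conditions (C.i) and (C.ii) at the point x₀ ∈ X. Let α > 0 and x⁺ = argmin_{y∈X}{ f_{x₀}(y;s) + (1/(2α))‖y − x₀‖² }. Then for every x ∈ X and every g ∈ ∂f_{x₀}(x₀;s) (so in particular g ∈ ∂f(x₀;s)), (1/2)‖x⁺ − x‖² ≤ (1/2)‖x₀ − x‖² − α[f(x₀;s) − f(x;s)] + (α²/2)‖g‖². -/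
open scoped RealInnerProductSpace

noncomputable section

lemma norm_combo {E : Type*} [NormedAddCommGroup E] [InnerProductSpace ℝ E]
    (a b c : E) (t : ℝ) :
    ‖(1 - t) • a + t • b - c‖ ^ 2 =
      (1 - t) * ‖a - c‖ ^ 2 + t * ‖b - c‖ ^ 2 - t * (1 - t) * ‖a - b‖ ^ 2 := by
  have h : (1 - t) • a + t • b - c = (1 - t) • (a - c) + t • (b - c) := by module
  rw [h]
  simp only [← real_inner_self_eq_norm_sq, inner_add_left, inner_add_right,
    inner_sub_left, inner_sub_right, real_inner_smul_left, real_inner_smul_right,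
    real_inner_comm c a, real_inner_comm b a, real_inner_comm c b]
  ring

/-- `g` is a subgradient of `h` at `x`, relative to the set `X`. -/
def IsSubgradAt {n : ℕ} (X : Set (EuclideanSpace ℝ (Fin n)))
    (h : EuclideanSpace ℝ (Fin n) → ℝ) (x g : EuclideanSpace ℝ (Fin n)) : Prop :=
  ∀ y ∈ X, h x + ⟪g, y - x⟫ ≤ h y

/-- `h` is subdifferentiable on `X`. -/
def SubdiffableOn {n : ℕ} (X : Set (EuclideanSpace ℝ (Fin n)))
    (h : EuclideanSpace ℝ (Fin n) → ℝ) : Prop :=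
  ∀ x ∈ X, ∃ g, IsSubgradAt X h x g

/-- `x₁` is the result of a proximal step on the function `h` from `x₀` with stepsize `α`:
it minimizes `h(y) + ‖y - x₀‖²/(2α)` over `y ∈ X`. -/
def IsProxStep {n : ℕ} (X : Set (EuclideanSpace ℝ (Fin n)))
    (h : EuclideanSpace ℝ (Fin n) → ℝ) (x₀ : EuclideanSpace ℝ (Fin n)) (α : ℝ)
    (x₁ : EuclideanSpace ℝ (Fin n)) : Prop :=
  x₁ ∈ X ∧ ∀ y ∈ X, h x₁ + ‖x₁ - x₀‖ ^ 2 / (2 * α) ≤ h y + ‖y - x₀‖ ^ 2 / (2 * α)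

/-- Lemma 3.5 (single recentered progress, one-step form): if the model `fm` satisfies
conditions (C.i)–(C.ii) for `f(·;s)` at `x₀ ∈ X` and
`x⁺ = argmin_{y ∈ X} { fm(y) + ‖y - x₀‖²/(2α) }`, then for every `x ∈ X` and any subgradient
`g ∈ ∂fm(x₀)` (so in particular `g ∈ ∂f(x₀;s)`),
`½‖x⁺ - x‖² ≤ ½‖x₀ - x‖² - α (f(x₀;s) - f(x;s)) + (α²/2)‖g‖²`. -/
theorem stmt6 {n : ℕ} (X : Set (EuclideanSpace ℝ (Fin n)))
    (hXcl : IsClosed X) (hXconv : Convex ℝ X)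
    (f : EuclideanSpace ℝ (Fin n) → ℝ) (hfconv : ConvexOn ℝ X f) (hfsub : SubdiffableOn X f)
    (fm : EuclideanSpace ℝ (Fin n) → ℝ) (hmconv : ConvexOn ℝ X fm) (hmsub : SubdiffableOn X fm)
    (x₀ : EuclideanSpace ℝ (Fin n)) (hx₀ : x₀ ∈ X)
    (hmeq : fm x₀ = f x₀) (hmle : ∀ y, fm y ≤ f y)
    (α : ℝ) (hα : 0 < α)
    (xp : EuclideanSpace ℝ (Fin n)) (hxp : IsProxStep X fm x₀ α xp) :
    ∀ x ∈ X, ∀ g, IsSubgradAt X fm x₀ g →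
      (1 / 2) * ‖xp - x‖ ^ 2 ≤
        (1 / 2) * ‖x₀ - x‖ ^ 2 - α * (f x₀ - f x) + α ^ 2 / 2 * ‖g‖ ^ 2 := by
  intro x hx g hg
  obtain ⟨hxpX, hmin⟩ := hxp
  set A := ‖xp - x₀‖ ^ 2 with hA
  set B := ‖x - x₀‖ ^ 2 with hB
  set C := ‖xp - x‖ ^ 2 with hC
  have hC0 : (0 : ℝ) ≤ C := by positivity
  have hβ : (0 : ℝ) < 2 * α := by linarith
  -- key three-point inequality
  have key2 : C ≤ (fm x - fm xp) * (2 * α) + B - A := by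
    refine le_of_forall_pos_le_add fun ε hε => ?_
    set t := min 1 (ε / (C + 1)) with htdef
    have ht0 : 0 < t := lt_min one_pos (div_pos hε (by positivity))
    have ht1 : t ≤ 1 := min_le_left _ _
    have htC : t * C ≤ ε := by
      have h1 : t ≤ ε / (C + 1) := min_le_right _ _
      have h2 : t * C ≤ (ε / (C + 1)) * C :=
        mul_le_mul_of_nonneg_right h1 hC0
      have h3 : (ε / (C + 1)) * C ≤ ε := by
        rw [div_mul_eq_mul_div, div_le_iff₀ (by positivity)]
        nlinarith
      linarith
    set y := (1 - t) • xp + t • x with hy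
    have hyX : y ∈ X := hXconv hxpX hx (by linarith) ht0.le (by ring)
    have h1 := hmin y hyX
    have h2 : fm y ≤ (1 - t) * fm xp + t * fm x :=
      hmconv.2 hxpX hx (by linarith) ht0.le (by ring)
    have h3 : ‖y - x₀‖ ^ 2 = (1 - t) * A + t * B - t * (1 - t) * C :=
      norm_combo xp x x₀ t
    -- multiply h1 through by 2α
    have h1' : fm xp * (2 * α) + A ≤ fm y * (2 * α) + ‖y - x₀‖ ^ 2 := by
      have := mul_le_mul_of_nonneg_right h1 hβ.le
      rw [add_mul, add_mul, div_mul_cancel₀ _ hβ.ne', div_mul_cancel₀ _ hβ.ne'] at this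
      linarith
    have h5 : t * (fm xp * (2 * α) + A + (1 - t) * C) ≤ t * (fm x * (2 * α) + B) := by
      have h2' : fm y * (2 * α) ≤ ((1 - t) * fm xp + t * fm x) * (2 * α) :=
        mul_le_mul_of_nonneg_right h2 hβ.le
      rw [h3] at h1'
      nlinarith [h1', h2']
    have h6 := le_of_mul_le_mul_left h5 ht0
    nlinarith [h6, htC]
  -- subgradient inequality at x₀ evaluated at xp
  have hsub := hg xp hxpX
  -- Cauchy–Schwarz
  have hcs : -(‖g‖ * ‖xp - x₀‖) ≤ ⟪g, xp - x₀⟫ := by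
    have := abs_real_inner_le_norm g (xp - x₀)
    rw [abs_le] at this
    exact this.1
  have hAB : ‖x₀ - x‖ ^ 2 = B := by rw [hB, norm_sub_rev]
  have hmlex := hmle x
  have hyoung : 2 * α * (‖g‖ * ‖xp - x₀‖) ≤ α ^ 2 * ‖g‖ ^ 2 + A := by
    nlinarith [sq_nonneg (α * ‖g‖ - ‖xp - x₀‖)]
  rw [hAB]
  nlinarith [key2, hsub, hmlex, hcs, hyoung, mul_le_mul_of_nonneg_left hcs hβ.le]
end
end

section
/- Let F be easy to optimize and let the iterates x_k be generated by the aProx iteration with a model satisfying conditions (C.i), (C.ii), and (C.iii). Then for every x* ∈ X* and every subgradient g_k ∈ ∂f_{x_k}(x_k;S_k) of the model at x_k (hence g_k ∈ ∂f(x_k;S_k)), (1/2)‖x_{k+1} − x*‖² ≤ (1/2)‖x_k − x*‖² − (1/2)[f(x_k;S_k) − f(x*;S_k)] · min{ α_k, (f(x_k;S_k) − f(x*;S_k))/‖g_k‖² }. -/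
/-!
Because `F` is easy to optimize, almost every sample is minimized over `X` by every point of `X*`
at once: a countable dense set of minimizers does so off a single null set, and a subgradient at
any other minimizer carries the minimality over to it by continuity. For such a sample,
(C.ii) and (C.iii) sandwich the model: `f_{x_k}(x*) ≤ f(x*) = inf f ≤ f_{x_k}(x_{k+1})`.
The prox objective is `(1/α_k)`-strongly convex, so the three-point inequality gives
`‖x_{k+1} - x*‖² ≤ ‖x_k - x*‖² - 2α_k δ - r²` with `r = ‖x_{k+1} - x_k‖` and model gap
`δ = f_{x_k}(x_{k+1}) - f_{x_k}(x*) ≥ max(0, Δ - ‖g‖ r)`, `Δ = f(x_k) - f(x*)`, the lower bound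
coming from the subgradient inequality. Minimizing `2α max(0, Δ - ‖g‖ r) + r²` over `r` leaves at
least `Δ min(α, Δ/‖g‖²)`.
-/

open MeasureTheory ProbabilityTheory Filter Metric
open scoped RealInnerProductSpace ENNReal NNReal Topology

noncomputable section

section StrongConvexity

variable {E : Type*} [NormedAddCommGroup E]

theorem StrongConvexOn.add_sq_norm_sub_le_of_isMinOn [NormedSpace ℝ E] {s : Set E} {m : ℝ}
    {φ : E → ℝ} {x y : E} (hφ : StrongConvexOn s m φ) (hmin : IsMinOn φ s x) (hx : x ∈ s)
    (hy : y ∈ s) : φ x + m / 2 * ‖y - x‖ ^ 2 ≤ φ y := by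
  have hsmall : ∀ t ∈ Set.Ioo (0 : ℝ) 1,
      φ x + m / 2 * ‖y - x‖ ^ 2 - φ y ≤ t * (m / 2 * ‖y - x‖ ^ 2) := by
    rintro t ⟨ht0, ht1⟩
    have hconv := hφ.2 hy hx ht0.le (by linarith) (add_sub_cancel t 1)
    have hle := isMinOn_iff.1 hmin _ (hφ.1 hy hx ht0.le (by linarith) (add_sub_cancel t 1))
    simp only [smul_eq_mul] at hconv
    refine le_of_mul_le_mul_left ?_ ht0
    linarith
  have hlim : Tendsto (fun t : ℝ => t * (m / 2 * ‖y - x‖ ^ 2)) (𝓝[>] 0) (𝓝 0) :=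
    tendsto_nhdsWithin_of_tendsto_nhds <| by
      simpa using (continuous_mul_const (m / 2 * ‖y - x‖ ^ 2)).tendsto (0 : ℝ)
  have := ge_of_tendsto hlim (eventually_of_mem (Ioo_mem_nhdsGT one_pos) hsmall)
  linarith

theorem ConvexOn.strongConvexOn_add_sq_norm_sub [InnerProductSpace ℝ E] {s : Set E} {h : E → ℝ}
    (hh : ConvexOn ℝ s h) (m : ℝ) (x₀ : E) :
    StrongConvexOn s m fun y => h y + m / 2 * ‖y - x₀‖ ^ 2 := by
  rw [strongConvexOn_iff_convex]
  refine ((hh.add (((-m) • innerₛₗ ℝ x₀).convexOn hh.1)).add_const (m / 2 * ‖x₀‖ ^ 2)).congr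
    fun y _ => ?_
  simp only [Pi.add_apply, LinearMap.smul_apply, innerₛₗ_apply_apply, smul_eq_mul,
    norm_sub_sq_real, real_inner_comm]
  ring

end StrongConvexity

theorem IsProxStep.three_point {n : ℕ} {X : Set (EuclideanSpace ℝ (Fin n))}
    {h : EuclideanSpace ℝ (Fin n) → ℝ} {x₀ x₁ z : EuclideanSpace ℝ (Fin n)} {α : ℝ}
    (hh : ConvexOn ℝ X h) (hp : IsProxStep X h x₀ α x₁) (hz : z ∈ X) :
    h x₁ + ‖x₁ - x₀‖ ^ 2 / (2 * α) + ‖z - x₁‖ ^ 2 / (2 * α)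
      ≤ h z + ‖z - x₀‖ ^ 2 / (2 * α) := by
  have hscale : ∀ r : ℝ, α⁻¹ / 2 * r = r / (2 * α) := fun r => by ring
  have hmin : IsMinOn (fun y => h y + α⁻¹ / 2 * ‖y - x₀‖ ^ 2) X x₁ :=
    isMinOn_iff.2 fun y hy => by simpa only [hscale] using hp.2 y hy
  simpa only [hscale] using
    (hh.strongConvexOn_add_sq_norm_sub α⁻¹ x₀).add_sq_norm_sub_le_of_isMinOn hmin hp.1 hz

theorem mul_min_div_sq_le {α Δ δ G r : ℝ} (hα : 0 ≤ α) (hΔ : 0 ≤ Δ) (hδ : 0 ≤ δ)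
    (hδΔ : Δ - G * r ≤ δ) : Δ * min α (Δ / G ^ 2) ≤ 2 * α * δ + r ^ 2 := by
  set τ := min α (Δ / G ^ 2)
  have hτ : 0 ≤ τ := le_min hα (by positivity)
  have hτG : τ * G ^ 2 ≤ Δ := by
    rcases (sq_nonneg G).eq_or_lt with hG | hG
    · simpa [← hG] using hΔ
    · exact (le_div_iff₀ hG).1 (min_le_right _ _)
  -- `τ δ ≤ α δ`, and `τ Δ ≤ 2τ (Δ - G r) + r²` since `(r - τ G)² + τ (Δ - τ G²) ≥ 0`
  nlinarith [mul_le_mul_of_nonneg_right (min_le_left α (Δ / G ^ 2)) hδ,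
    mul_le_mul_of_nonneg_left hδΔ hτ, sq_nonneg (r - τ * G), mul_nonneg hτ (sub_nonneg.2 hτG)]

theorem IsProxStep.half_sq_norm_sub_le {n : ℕ} {X : Set (EuclideanSpace ℝ (Fin n))}
    {h : EuclideanSpace ℝ (Fin n) → ℝ} {x₀ x₁ z g : EuclideanSpace ℝ (Fin n)} {α c : ℝ}
    (hh : ConvexOn ℝ X h) (hα : 0 < α) (hp : IsProxStep X h x₀ α x₁) (hx₀ : x₀ ∈ X)
    (hz : z ∈ X) (hg : IsSubgradAt X h x₀ g) (hzc : h z ≤ c) (hcx₁ : c ≤ h x₁) :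
    (1 / 2) * ‖x₁ - z‖ ^ 2 ≤
      (1 / 2) * ‖x₀ - z‖ ^ 2 - (1 / 2) * (h x₀ - c) * min α ((h x₀ - c) / ‖g‖ ^ 2) := by
  have hdescent : h x₁ ≤ h x₀ := by
    have := hp.2 x₀ hx₀
    rw [sub_self, norm_zero, zero_pow two_ne_zero, zero_div, add_zero] at this
    linarith [div_nonneg (sq_nonneg ‖x₁ - x₀‖) (by positivity : (0 : ℝ) ≤ 2 * α)]
  have hlinear : h x₀ - ‖g‖ * ‖x₁ - x₀‖ ≤ h x₁ := by
    linarith [hg x₁ hp.1, neg_le_of_abs_le (abs_real_inner_le_norm g (x₁ - x₀))]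
  have hthree : 2 * α * (h x₁ - h z) + ‖x₁ - x₀‖ ^ 2 + ‖z - x₁‖ ^ 2 ≤ ‖z - x₀‖ ^ 2 := by
    have := hp.three_point hh hz
    field_simp at this
    linarith
  have hscalar := mul_min_div_sq_le (r := ‖x₁ - x₀‖) hα.le (sub_nonneg.2 (hcx₁.trans hdescent))
    (sub_nonneg.2 (hzc.trans hcx₁)) (by linarith : h x₀ - c - ‖g‖ * ‖x₁ - x₀‖ ≤ h x₁ - h z)
  rw [norm_sub_rev x₁, norm_sub_rev x₀]
  linarith

theorem IsSubgradAt.isMinOn_of_mem_closure {n : ℕ} {X D : Set (EuclideanSpace ℝ (Fin n))}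
    {h : EuclideanSpace ℝ (Fin n) → ℝ} {z g : EuclideanSpace ℝ (Fin n)}
    (hg : IsSubgradAt X h z g) (hDX : D ⊆ X) (hD : ∀ d ∈ D, IsMinOn h X d)
    (hz : z ∈ closure D) : IsMinOn h X z := by
  refine isMinOn_iff.2 fun y hy => ?_
  have hclosed : IsClosed {w | h z + ⟪g, w - z⟫ ≤ h y} :=
    isClosed_le (by fun_prop) continuous_const
  have hDsub : D ⊆ {w | h z + ⟪g, w - z⟫ ≤ h y} := fun d hd =>
    (hg d (hDX hd)).trans (isMinOn_iff.1 (hD d hd) y hy)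
  simpa using hclosed.closure_subset_iff.2 hDsub hz

theorem ae_forall_isMinOn_of_subdiffableOn {n : ℕ} {𝕊 : Type*} [MeasurableSpace 𝕊]
    {ν : Measure 𝕊} {X A : Set (EuclideanSpace ℝ (Fin n))}
    {f : EuclideanSpace ℝ (Fin n) → 𝕊 → ℝ} (hAX : A ⊆ X)
    (hf : ∀ s, SubdiffableOn X fun z => f z s)
    (hA : ∀ z ∈ A, ∀ᵐ s ∂ν, IsMinOn (fun y => f y s) X z) :
    ∀ᵐ s ∂ν, ∀ z ∈ A, IsMinOn (fun y => f y s) X z := by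
  obtain ⟨D, hDA, hDcount, hAD⟩ :=
    (TopologicalSpace.IsSeparable.of_separableSpace A).exists_countable_dense_subset
  filter_upwards [(ae_ball_iff hDcount).2 fun d hd => hA d (hDA hd)] with s hs z hz
  obtain ⟨g, hg⟩ := hf s z (hAX hz)
  exact hg.isMinOn_of_mem_closure (hDA.trans hAX) hs (hAD hz)

theorem stmt10_general
    {n : ℕ} {𝕊 : Type*} [m𝕊 : MeasurableSpace 𝕊]
    {Ω : Type*} [mΩ : MeasurableSpace Ω] (μ : Measure Ω)
    (ν : Measure 𝕊)
    -- the instantaneous objectives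
    (X : Set (EuclideanSpace ℝ (Fin n)))
    (f : EuclideanSpace ℝ (Fin n) → 𝕊 → ℝ)
    (hfsub : ∀ s, SubdiffableOn X (fun z => f z s))
    -- the model, satisfying conditions (C.i) and (C.ii)
    (fm : EuclideanSpace ℝ (Fin n) → 𝕊 → EuclideanSpace ℝ (Fin n) → ℝ)
    (hmconv : ∀ z s, ConvexOn ℝ X (fm z s))
    (hmeq : ∀ z ∈ X, ∀ s, fm z s z = f z s)
    (hmle : ∀ z ∈ X, ∀ s, ∀ y, fm z s y ≤ f y s)
    -- the set of minimizers of F(x) = E[f(x;S)] over X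
    (Xstar : Set (EuclideanSpace ℝ (Fin n)))
    (hXstar : Xstar = {z | z ∈ X ∧ ∀ y ∈ X, (∫ s, f z s ∂ν) ≤ ∫ s, f y s ∂ν})
    -- Condition (C.iii): the model is bounded below by the infimum of f(·;s) over X
    (hmlow : ∀ z ∈ X, ∀ s, ∀ y, sInf ((fun w => f w s) '' X) ≤ fm z s y)
    -- F is easy to optimize: the minimizers are shared for P-almost every sample
    (heasy : ∀ z ∈ Xstar, ∀ᵐ s ∂ν, ∀ y ∈ X, f z s ≤ f y s)
    -- stepsizes, i.i.d. samples, and aProx iterates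
    (α : ℕ → ℝ) (hαpos : ∀ k, 0 < α k)
    (S : ℕ → Ω → 𝕊) (hSmeas : ∀ k, Measurable (S k))
    (hSlaw : ∀ k, Measure.map (S k) μ = ν)
    (x : ℕ → Ω → EuclideanSpace ℝ (Fin n))
    (x₁ : EuclideanSpace ℝ (Fin n)) (hx₁X : x₁ ∈ X) (hxinit : ∀ ω, x 1 ω = x₁)
    (hupdate : ∀ k, 1 ≤ k → ∀ ω,
      IsProxStep X (fm (x k ω) (S k ω)) (x k ω) (α k) (x (k + 1) ω))
    :
    ∀ k, 1 ≤ k →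
      ∀ᵐ ω ∂μ, ∀ z ∈ Xstar, ∀ g,
        IsSubgradAt X (fm (x k ω) (S k ω)) (x k ω) g →
          (1 / 2) * ‖x (k + 1) ω - z‖ ^ 2 ≤
            (1 / 2) * ‖x k ω - z‖ ^ 2 -
              (1 / 2) * (f (x k ω) (S k ω) - f z (S k ω)) *
                min (α k) ((f (x k ω) (S k ω) - f z (S k ω)) / ‖g‖ ^ 2) := by
  intro k hk
  have hXstarX : Xstar ⊆ X := hXstar ▸ fun z hz => hz.1
  have hshared : ∀ᵐ s ∂ν, ∀ z ∈ Xstar, IsMinOn (fun y => f y s) X z :=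
    ae_forall_isMinOn_of_subdiffableOn hXstarX hfsub fun z hz =>
      (heasy z hz).mono fun s hs => isMinOn_iff.2 hs
  have hsharedS : ∀ᵐ ω ∂μ, ∀ z ∈ Xstar, IsMinOn (fun y => f y (S k ω)) X z :=
    ae_of_ae_map (hSmeas k).aemeasurable (by rwa [hSlaw k])
  filter_upwards [hsharedS] with ω hω z hz g hg
  have hxk : x k ω ∈ X := by
    obtain rfl | hk₁ := hk.eq_or_lt
    · exact hxinit ω ▸ hx₁X
    · simpa [Nat.sub_add_cancel hk₁.le] using (hupdate (k - 1) (by omega) ω).1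
  have hzX := hXstarX hz
  have hzinf : f z (S k ω) ≤ sInf ((fun w => f w (S k ω)) '' X) :=
    le_csInf (Set.Nonempty.image _ ⟨z, hzX⟩) (Set.forall_mem_image.2 (isMinOn_iff.1 (hω z hz)))
  simpa only [hmeq _ hxk] using (hupdate k hk ω).half_sq_norm_sub_le (hmconv _ _) (hαpos k) hxk
    hzX hg (hmle _ hxk _ z) (hzinf.trans (hmlow _ hxk _ _))

/-- Lemma 4.1 (shared-min progress): if `F` is easy to optimize and the model satisfies
(C.i)–(C.iii), then for every `x* ∈ X*` and every subgradient `g ∈ ∂f_{x_k}(x_k; S_k)` of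
the model at `x_k` (hence `g ∈ ∂f(x_k; S_k)`), almost surely
`½‖x_{k+1} - x*‖² ≤ ½‖x_k - x*‖²
  - ½ (f(x_k;S_k) - f(x*;S_k)) min{α_k, (f(x_k;S_k) - f(x*;S_k))/‖g‖²}`. -/
theorem stmt10
    {n : ℕ} {𝕊 : Type*} [m𝕊 : MeasurableSpace 𝕊]
    {Ω : Type*} [mΩ : MeasurableSpace Ω] (μ : Measure Ω) [IsProbabilityMeasure μ]
    (ν : Measure 𝕊) [IsProbabilityMeasure ν]
    -- the instantaneous objectives
    (X : Set (EuclideanSpace ℝ (Fin n))) (hXcl : IsClosed X) (hXconv : Convex ℝ X)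
    (f : EuclideanSpace ℝ (Fin n) → 𝕊 → ℝ)
    (hfconv : ∀ s, ConvexOn ℝ X (fun z => f z s))
    (hfsub : ∀ s, SubdiffableOn X (fun z => f z s))
    (hfint : ∀ z, Integrable (fun s => f z s) ν)
    -- the model, satisfying conditions (C.i) and (C.ii)
    (fm : EuclideanSpace ℝ (Fin n) → 𝕊 → EuclideanSpace ℝ (Fin n) → ℝ)
    (hmconv : ∀ z s, ConvexOn ℝ X (fm z s))
    (hmsub : ∀ z s, SubdiffableOn X (fm z s))
    (hmeq : ∀ z ∈ X, ∀ s, fm z s z = f z s)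
    (hmle : ∀ z ∈ X, ∀ s, ∀ y, fm z s y ≤ f y s)
    -- the set of minimizers of F(x) = E[f(x;S)] over X
    (Xstar : Set (EuclideanSpace ℝ (Fin n)))
    (hXstar : Xstar = {z | z ∈ X ∧ ∀ y ∈ X, (∫ s, f z s ∂ν) ≤ ∫ s, f y s ∂ν})
    (hXstarne : Xstar.Nonempty)
    -- Condition (C.iii): the model is bounded below by the infimum of f(·;s) over X
    (hmlow : ∀ z ∈ X, ∀ s, ∀ y, sInf ((fun w => f w s) '' X) ≤ fm z s y)
    -- F is easy to optimize: the minimizers are shared for P-almost every sample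
    (heasy : ∀ z ∈ Xstar, ∀ᵐ s ∂ν, ∀ y ∈ X, f z s ≤ f y s)
    -- stepsizes, i.i.d. samples, and aProx iterates
    (α : ℕ → ℝ) (hαpos : ∀ k, 0 < α k)
    (S : ℕ → Ω → 𝕊) (hSmeas : ∀ k, Measurable (S k))
    (hSiid : iIndepFun S μ)
    (hSlaw : ∀ k, Measure.map (S k) μ = ν)
    (x : ℕ → Ω → EuclideanSpace ℝ (Fin n))
    (hxmeas : ∀ k, Measurable (x k))
    (x₁ : EuclideanSpace ℝ (Fin n)) (hx₁X : x₁ ∈ X) (hxinit : ∀ ω, x 1 ω = x₁)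
    (hupdate : ∀ k, 1 ≤ k → ∀ ω,
      IsProxStep X (fm (x k ω) (S k ω)) (x k ω) (α k) (x (k + 1) ω))
    :
    ∀ k, 1 ≤ k →
      ∀ᵐ ω ∂μ, ∀ z ∈ Xstar, ∀ g,
        IsSubgradAt X (fm (x k ω) (S k ω)) (x k ω) g →
          (1 / 2) * ‖x (k + 1) ω - z‖ ^ 2 ≤
            (1 / 2) * ‖x k ω - z‖ ^ 2 -
              (1 / 2) * (f (x k ω) (S k ω) - f z (S k ω)) *
                min (α k) ((f (x k ω) (S k ω) - f z (S k ω)) / ‖g‖ ^ 2) :=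
  stmt10_general (m𝕊 := m𝕊) (mΩ := mΩ) μ ν X f hfsub fm hmconv hmeq hmle Xstar hXstar hmlow heasy α
    hαpos S hSmeas hSlaw x x₁ hx₁X hxinit hupdate
end
end

section
/- Consider the underdetermined least-squares problem with data matrix A ∈ ℝ^{m×n} (n > m) whose rows a_i satisfy ‖a_i‖ = √n and whose m-th singular value satisfies σ_m(A) ≥ √m, with b = A x* for the minimum-norm interpolant x* ∈ span{a₁,…,a_m}. Let x_k be generated by the aProx iteration applied to f_i(x) = (1/2)(⟨a_i, x⟩ − b_i)² with index i drawn uniformly at random at each step, using the truncated model f_x(y;i) = max{ f_i(x) + ⟨∇f_i(x), y − x⟩, 0 }, stepsizes α_k = α₀ k^{−β} with β ∈ (0,1), and initial point x₁ ∈ span{a₁,…,a_m}. Then there exists a constant C depending only on n, m, α₀, β such that for all k ∈ ℕ, E[‖x_k − x*‖²] ≤ C max{ exp(−k/m), exp(−(α₀/(1−β)) k^{1−β}) } · ‖x₁ − x*‖². -/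
open MeasureTheory ProbabilityTheory
open scoped RealInnerProductSpace ENNReal

noncomputable section

/-!
With `‖aᵢ‖² = n`, the truncated step length is `t_k = min(α_k, 1/(2n))` whenever the residual is
nonzero, and expanding the square gives
`‖x_{k+1} - x*‖² ≤ ‖x_k - x*‖² - t_k ⟪a_{I_k}, x_k - x*⟫²`.
The iterate `x_k` is a function of the indices drawn before step `k`, hence independent of `I_k`,
so averaging over the uniform index turns the last term into `(t_k / m) ‖A (x_k - x*)‖²`. This is
at least `t_k ‖x_k - x*‖²` because `x_k - x*` stays in the row span, where `‖A v‖² ≥ m ‖v‖²`.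
Hence `E‖x_k - x*‖² ≤ exp(-∑_{1 ≤ j < k} t_j) ‖x₁ - x*‖²`, and since `t_j = α₀ j^{-β}` for all but
finitely many `j`, comparison with `∫ y^{-β} dy` bounds the exponent by
`-(α₀ / (1 - β)) k^{1-β} + O(1)`, the second term of the maximum.
-/

section TruncatedStep

variable {E : Type*} [NormedAddCommGroup E] [InnerProductSpace ℝ E]

/-- The aProx step with the truncated model of `½ (⟪a, x⟫ - b)²`, in closed form. -/
def truncatedStep (a : E) (b α : ℝ) (x : E) : E :=
  x - min α ((1 / 2) * (⟪a, x⟫ - b) ^ 2 / ‖(⟪a, x⟫ - b) • a‖ ^ 2) • ((⟪a, x⟫ - b) • a)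

theorem truncatedStep_mem {S : Submodule ℝ E} {a x : E} (ha : a ∈ S) (hx : x ∈ S) (b α : ℝ) :
    truncatedStep a b α x ∈ S :=
  S.sub_mem hx (S.smul_mem _ (S.smul_mem _ ha))

theorem norm_truncatedStep_sub_sq_le {a x xs : E} {b α t : ℝ} (hxs : ⟪a, xs⟫ = b)
    (ht : 0 ≤ t) (htα : t ≤ α) (hta : t * ‖a‖ ^ 2 ≤ 1 / 2) :
    ‖truncatedStep a b α x - xs‖ ^ 2 ≤ ‖x - xs‖ ^ 2 - t * ⟪a, x - xs⟫ ^ 2 := by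
  have hr : ⟪a, x⟫ - b = ⟪a, x - xs⟫ := by rw [inner_sub_right, hxs]
  set r := ⟪a, x - xs⟫
  rcases eq_or_ne r 0 with h0 | h0
  · simp [truncatedStep, hr, h0]
  have ha : ‖a‖ ≠ 0 := fun h => h0 (by simp [r, norm_eq_zero.1 h])
  set s := min α (1 / (2 * ‖a‖ ^ 2))
  have hs : min α ((1 / 2) * r ^ 2 / ‖r • a‖ ^ 2) = s := by
    rw [norm_smul, mul_pow, Real.norm_eq_abs, sq_abs]
    congr 1
    field_simp
  have hdiff : truncatedStep a b α x - xs = (x - xs) - (s * r) • a := by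
    rw [truncatedStep, hr, hs, smul_smul]
    abel
  have hts : t ≤ s := le_min htα (by rw [le_div_iff₀ (by positivity)]; linarith)
  have hsa : s * ‖a‖ ^ 2 ≤ 1 / 2 := calc
    s * ‖a‖ ^ 2 ≤ 1 / (2 * ‖a‖ ^ 2) * ‖a‖ ^ 2 := by gcongr; exact min_le_right _ _
    _ = 1 / 2 := by field_simp
  have hs0 : 0 ≤ s := ht.trans hts
  rw [hdiff, norm_sub_sq_real, norm_smul, mul_pow, real_inner_smul_right, real_inner_comm,
    Real.norm_eq_abs, sq_abs]
  nlinarith [mul_le_mul_of_nonneg_left hsa (mul_nonneg hs0 (sq_nonneg r)),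
    mul_le_mul_of_nonneg_right hts (sq_nonneg r)]

theorem norm_truncatedStep_sub_le {a x xs : E} {b α : ℝ} (hxs : ⟪a, xs⟫ = b) (hα : 0 ≤ α) :
    ‖truncatedStep a b α x - xs‖ ≤ ‖x - xs‖ := by
  have := norm_truncatedStep_sub_sq_le (x := x) hxs le_rfl hα (by norm_num)
  rw [zero_mul, sub_zero] at this
  exact (pow_le_pow_iff_left₀ (norm_nonneg _) (norm_nonneg _) two_ne_zero).1 this

end TruncatedStep

section RandomRecursion

variable {Ω β γ : Type*} {I : ℕ → Ω → β} {x : ℕ → Ω → γ} {F : ℕ → β → γ → γ} {x₁ : γ}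

theorem ProbabilityTheory.iIndepFun.indepFun_comp_prefix [MeasurableSpace Ω] [MeasurableSpace β]
    [MeasurableSpace γ] {μ : Measure Ω} (hI : iIndepFun I μ) (hImeas : ∀ j, Measurable (I j))
    {k : ℕ} {φ : (Fin k → β) → γ} (hφ : Measurable φ) :
    IndepFun (fun ω => φ (fun j => I j ω)) (I k) μ := by
  have h := hI.indepFun_finset (Finset.range k) {k} (by simp) hImeas
  have hψ : Measurable fun g : ({k} : Finset ℕ) → β => g ⟨k, Finset.mem_singleton_self k⟩ :=
    measurable_pi_apply _
  exact h.comp (φ := fun g => φ fun j => g ⟨j, Finset.mem_range.2 j.2⟩)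
    (hφ.comp (measurable_pi_lambda _ fun j => measurable_pi_apply _)) hψ

theorem exists_eq_comp_prefix_of_recursion (hinit : ∀ ω, x 1 ω = x₁)
    (hstep : ∀ k, 1 ≤ k → ∀ ω, x (k + 1) ω = F k (I k ω) (x k ω)) {k : ℕ} (hk : 1 ≤ k) :
    ∃ φ : (Fin k → β) → γ, ∀ ω, x k ω = φ (fun j => I j ω) := by
  induction k, hk using Nat.le_induction with
  | base => exact ⟨fun _ => x₁, hinit⟩
  | succ k hk ih =>
    obtain ⟨φ, hφ⟩ := ih
    exact ⟨fun g => F k (g (Fin.last k)) (φ fun j => g j.castSucc),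
      fun ω => by simp [hstep k hk ω, hφ ω]⟩

variable [MeasurableSpace Ω] [MeasurableSpace β] [MeasurableSpace γ] [Countable β]
  [MeasurableSingletonClass β]

theorem measurable_of_recursion (hImeas : ∀ j, Measurable (I j)) (hinit : ∀ ω, x 1 ω = x₁)
    (hstep : ∀ k, 1 ≤ k → ∀ ω, x (k + 1) ω = F k (I k ω) (x k ω)) {k : ℕ} (hk : 1 ≤ k) :
    Measurable (x k) := by
  obtain ⟨φ, hφ⟩ := exists_eq_comp_prefix_of_recursion hinit hstep hk
  rw [funext hφ]
  exact (measurable_of_countable φ).comp (measurable_pi_lambda _ fun j => hImeas j)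

theorem indepFun_of_recursion {μ : Measure Ω} (hI : iIndepFun I μ)
    (hImeas : ∀ j, Measurable (I j)) (hinit : ∀ ω, x 1 ω = x₁)
    (hstep : ∀ k, 1 ≤ k → ∀ ω, x (k + 1) ω = F k (I k ω) (x k ω)) {k : ℕ} (hk : 1 ≤ k) :
    IndepFun (x k) (I k) μ := by
  obtain ⟨φ, hφ⟩ := exists_eq_comp_prefix_of_recursion hinit hstep hk
  rw [funext hφ]
  exact hI.indepFun_comp_prefix hImeas (measurable_of_countable φ)

end RandomRecursion

section UniformIndex

variable {γ : Type*} {m : ℕ}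

theorem apply_eq_sum_mul_indicator (g : Fin m → γ → ℝ) (j : Fin m) (y : γ) :
    g j y = ∑ i, g i y * ({i} : Set (Fin m)).indicator 1 j := by
  simp [Set.indicator_apply]

variable {Ω : Type*} [MeasurableSpace Ω] {μ : Measure Ω} {X : Ω → γ} {J : Ω → Fin m}
  {g : Fin m → γ → ℝ}

theorem MeasureTheory.Integrable.mul_indicator_one_comp {β : Type*} [MeasurableSpace β]
    {f : Ω → ℝ} (hf : Integrable f μ) {Y : Ω → β} (hY : Measurable Y) {s : Set β}
    (hs : MeasurableSet s) : Integrable (fun ω => f ω * s.indicator 1 (Y ω)) μ :=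
  hf.mul_bdd ((measurable_one.indicator hs).comp hY).aestronglyMeasurable
    (Filter.Eventually.of_forall fun _ => (norm_indicator_le_norm_self _ _).trans_eq norm_one)

theorem integrable_apply_index (hJ : Measurable J)
    (hint : ∀ i, Integrable (fun ω => g i (X ω)) μ) :
    Integrable (fun ω => g (J ω) (X ω)) μ := by
  simp_rw [apply_eq_sum_mul_indicator g (J _)]
  exact integrable_finsetSum _ fun i _ =>
    (hint i).mul_indicator_one_comp hJ (measurableSet_singleton i)

theorem integral_indicator_singleton_comp (hJ : Measurable J)
    (hunif : ∀ i, μ {ω | J ω = i} = (m : ℝ≥0∞)⁻¹) (i : Fin m) :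
    ∫ ω, ({i} : Set (Fin m)).indicator 1 (J ω) ∂μ = (m : ℝ)⁻¹ := by
  simp_rw [← Set.indicator_comp_right]
  rw [show (1 : Fin m → ℝ) ∘ J = 1 from rfl,
    integral_indicator_one (hJ (measurableSet_singleton i)), measureReal_def]
  simp [Set.preimage, hunif i]

theorem integral_apply_index_of_indepFun [MeasurableSpace γ] (hX : Measurable X)
    (hJ : Measurable J) (hXJ : IndepFun X J μ) (hunif : ∀ i, μ {ω | J ω = i} = (m : ℝ≥0∞)⁻¹)
    (hg : ∀ i, Measurable (g i)) (hint : ∀ i, Integrable (fun ω => g i (X ω)) μ) :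
    ∫ ω, g (J ω) (X ω) ∂μ = (m : ℝ)⁻¹ * ∑ i, ∫ ω, g i (X ω) ∂μ := by
  simp_rw [apply_eq_sum_mul_indicator g (J _)]
  rw [integral_finsetSum _ fun i _ => (hint i).mul_indicator_one_comp hJ
    (measurableSet_singleton i), Finset.mul_sum]
  refine Finset.sum_congr rfl fun i _ => ?_
  have hind : Measurable (({i} : Set (Fin m)).indicator (1 : Fin m → ℝ)) :=
    measurable_one.indicator (measurableSet_singleton i)
  rw [mul_comm, ← integral_indicator_singleton_comp hJ hunif i]
  exact (hXJ.comp (hg i) hind).integral_mul_eq_mul_integral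
    ((hg i).comp hX).aestronglyMeasurable (hind.comp hJ).aestronglyMeasurable

end UniformIndex

section Expectation

variable {Ω E : Type*} [MeasurableSpace Ω] [NormedAddCommGroup E] [InnerProductSpace ℝ E]
  [MeasurableSpace E] [BorelSpace E] {μ : Measure Ω}

theorem integrable_inner_sq {X : Ω → E} (hX : AEMeasurable X μ)
    (hXint : Integrable (fun ω => ‖X ω‖ ^ 2) μ) (c : E) :
    Integrable (fun ω => ⟪c, X ω⟫ ^ 2) μ := by
  have hmeas : Measurable fun v : E => ⟪c, v⟫ ^ 2 :=
    ((continuous_const.inner continuous_id).pow 2).measurable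
  refine (hXint.const_mul (‖c‖ ^ 2)).mono' (hmeas.comp_aemeasurable hX).aestronglyMeasurable
    (Filter.Eventually.of_forall fun ω => ?_)
  rw [Real.norm_eq_abs, abs_sq, ← mul_pow, ← sq_abs]
  exact pow_le_pow_left₀ (abs_nonneg _) (abs_real_inner_le_norm _ _) 2

theorem integral_norm_sq_le_integral_inner_sq {m : ℕ} (hm : 0 < m) {a : Fin m → E}
    (hsigma : ∀ v ∈ Submodule.span ℝ (Set.range a), (m : ℝ) * ‖v‖ ^ 2 ≤ ∑ i, ⟪a i, v⟫ ^ 2)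
    {X : Ω → E} {J : Ω → Fin m} (hX : Measurable X) (hJ : Measurable J) (hXJ : IndepFun X J μ)
    (hunif : ∀ i, μ {ω | J ω = i} = (m : ℝ≥0∞)⁻¹)
    (hspan : ∀ ω, X ω ∈ Submodule.span ℝ (Set.range a))
    (hXint : Integrable (fun ω => ‖X ω‖ ^ 2) μ) :
    ∫ ω, ‖X ω‖ ^ 2 ∂μ ≤ ∫ ω, ⟪a (J ω), X ω⟫ ^ 2 ∂μ := by
  have hint i := integrable_inner_sq hX.aemeasurable hXint (a i)
  rw [integral_apply_index_of_indepFun (g := fun i v => ⟪a i, v⟫ ^ 2) hX hJ hXJ hunif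
    (fun i => ((continuous_const.inner continuous_id).pow 2).measurable) hint,
    ← integral_finsetSum _ fun i _ => hint i, ← integral_const_mul]
  refine integral_mono hXint ((integrable_finsetSum _ fun i _ => hint i).const_mul _) fun ω => ?_
  rw [le_inv_mul_iff₀ (Nat.cast_pos.2 hm)]
  exact hsigma _ (hspan ω)

theorem integral_norm_truncatedStep_sub_sq_le {m : ℕ} (hm : 0 < m) {a : Fin m → E}
    {b : Fin m → ℝ} {xs : E} (hxs : ∀ i, ⟪a i, xs⟫ = b i)
    (hsigma : ∀ v ∈ Submodule.span ℝ (Set.range a), (m : ℝ) * ‖v‖ ^ 2 ≤ ∑ i, ⟪a i, v⟫ ^ 2)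
    {α t : ℝ} (ht : 0 ≤ t) (htα : t ≤ α) (hta : ∀ i, t * ‖a i‖ ^ 2 ≤ 1 / 2)
    {X : Ω → E} {J : Ω → Fin m} (hX : Measurable X) (hJ : Measurable J) (hXJ : IndepFun X J μ)
    (hunif : ∀ i, μ {ω | J ω = i} = (m : ℝ≥0∞)⁻¹)
    (hspan : ∀ ω, X ω - xs ∈ Submodule.span ℝ (Set.range a))
    (hXint : Integrable (fun ω => ‖X ω - xs‖ ^ 2) μ) :
    ∫ ω, ‖truncatedStep (a (J ω)) (b (J ω)) α (X ω) - xs‖ ^ 2 ∂μ ≤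
      (1 - t) * ∫ ω, ‖X ω - xs‖ ^ 2 ∂μ := by
  have he : Measurable fun ω => X ω - xs := hX.sub_const xs
  have hinner : Integrable (fun ω => ⟪a (J ω), X ω - xs⟫ ^ 2) μ :=
    integrable_apply_index (g := fun i v => ⟪a i, v⟫ ^ 2) hJ
      fun i => integrable_inner_sq he.aemeasurable hXint (a i)
  calc ∫ ω, ‖truncatedStep (a (J ω)) (b (J ω)) α (X ω) - xs‖ ^ 2 ∂μ
      ≤ ∫ ω, (‖X ω - xs‖ ^ 2 - t * ⟪a (J ω), X ω - xs⟫ ^ 2) ∂μ :=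
        integral_mono_of_nonneg (Filter.Eventually.of_forall fun ω => sq_nonneg _)
          (hXint.sub (hinner.const_mul t)) (Filter.Eventually.of_forall fun ω =>
            norm_truncatedStep_sub_sq_le (hxs _) ht htα (hta _))
    _ = ∫ ω, ‖X ω - xs‖ ^ 2 ∂μ - t * ∫ ω, ⟪a (J ω), X ω - xs⟫ ^ 2 ∂μ := by
        rw [integral_sub hXint (hinner.const_mul t), integral_const_mul]
    _ ≤ ∫ ω, ‖X ω - xs‖ ^ 2 ∂μ - t * ∫ ω, ‖X ω - xs‖ ^ 2 ∂μ := by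
        have := integral_norm_sq_le_integral_inner_sq hm hsigma he hJ
          (hXJ.comp (measurable_sub_const' xs) measurable_id) hunif hspan hXint
        gcongr
    _ = (1 - t) * ∫ ω, ‖X ω - xs‖ ^ 2 ∂μ := by ring

end Expectation

section TruncatedIteration

variable {E : Type*} [NormedAddCommGroup E] [InnerProductSpace ℝ E] {Ω : Type*} {m : ℕ}
  {a : Fin m → E} {b : Fin m → ℝ} {I : ℕ → Ω → Fin m} {α : ℕ → ℝ} {x₁ : E} {x : ℕ → Ω → E}

theorem truncatedStep_iterate_mem (hx₁ : x₁ ∈ Submodule.span ℝ (Set.range a))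
    (hinit : ∀ ω, x 1 ω = x₁)
    (hstep : ∀ k, 1 ≤ k → ∀ ω, x (k + 1) ω = truncatedStep (a (I k ω)) (b (I k ω)) (α k) (x k ω))
    {k : ℕ} (hk : 1 ≤ k) (ω : Ω) : x k ω ∈ Submodule.span ℝ (Set.range a) := by
  induction k, hk using Nat.le_induction with
  | base => exact hinit ω ▸ hx₁
  | succ k hk ih =>
    exact hstep k hk ω ▸ truncatedStep_mem (Submodule.subset_span (Set.mem_range_self _)) ih _ _

theorem norm_truncatedStep_iterate_sub_le {xs : E} (hxs : ∀ i, ⟪a i, xs⟫ = b i)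
    (hα : ∀ k, 0 ≤ α k) (hinit : ∀ ω, x 1 ω = x₁)
    (hstep : ∀ k, 1 ≤ k → ∀ ω, x (k + 1) ω = truncatedStep (a (I k ω)) (b (I k ω)) (α k) (x k ω))
    {k : ℕ} (hk : 1 ≤ k) (ω : Ω) : ‖x k ω - xs‖ ≤ ‖x₁ - xs‖ := by
  induction k, hk using Nat.le_induction with
  | base => rw [hinit]
  | succ k hk ih => exact hstep k hk ω ▸ (norm_truncatedStep_sub_le (hxs _) (hα k)).trans ih

theorem integral_norm_truncatedStep_iterate_sub_sq_le [MeasurableSpace E] [BorelSpace E]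
    [MeasurableSpace Ω] {μ : Measure Ω} [IsFiniteMeasure μ] (hm : 0 < m) {xs : E}
    (hxs : ∀ i, ⟪a i, xs⟫ = b i) (hxs_span : xs ∈ Submodule.span ℝ (Set.range a))
    (hsigma : ∀ v ∈ Submodule.span ℝ (Set.range a), (m : ℝ) * ‖v‖ ^ 2 ≤ ∑ i, ⟪a i, v⟫ ^ 2)
    (hImeas : ∀ k, Measurable (I k)) (hI : iIndepFun I μ) {k : ℕ}
    (hunif : ∀ i, μ {ω | I k ω = i} = (m : ℝ≥0∞)⁻¹) (hα : ∀ k, 0 ≤ α k) {t : ℝ} (ht : 0 ≤ t)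
    (htα : t ≤ α k) (hta : ∀ i, t * ‖a i‖ ^ 2 ≤ 1 / 2)
    (hx₁ : x₁ ∈ Submodule.span ℝ (Set.range a)) (hinit : ∀ ω, x 1 ω = x₁)
    (hstep : ∀ k, 1 ≤ k → ∀ ω, x (k + 1) ω = truncatedStep (a (I k ω)) (b (I k ω)) (α k) (x k ω))
    (hk : 1 ≤ k) :
    ∫ ω, ‖x (k + 1) ω - xs‖ ^ 2 ∂μ ≤ (1 - t) * ∫ ω, ‖x k ω - xs‖ ^ 2 ∂μ := by
  have hxk := measurable_of_recursion (F := fun k i y => truncatedStep (a i) (b i) (α k) y)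
    hImeas hinit hstep hk
  have hindep := indepFun_of_recursion (F := fun k i y => truncatedStep (a i) (b i) (α k) y)
    hI hImeas hinit hstep hk
  simp_rw [hstep k hk]
  refine integral_norm_truncatedStep_sub_sq_le hm hxs hsigma ht htα hta hxk (hImeas k) hindep hunif
    (fun ω => Submodule.sub_mem _ (truncatedStep_iterate_mem hx₁ hinit hstep hk ω) hxs_span)
    (Integrable.of_bound ((hxk.sub_const _).norm.pow_const 2).aestronglyMeasurable
      (‖x₁ - xs‖ ^ 2) (Filter.Eventually.of_forall fun ω => ?_))
  rw [Real.norm_eq_abs, abs_sq]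
  exact pow_le_pow_left₀ (norm_nonneg _)
    (norm_truncatedStep_iterate_sub_le hxs hα hinit hstep hk ω) 2

end TruncatedIteration

section RealSequences

open Finset

theorem le_exp_neg_sum_mul_of_le_one_sub_mul {M t : ℕ → ℝ} (ht : ∀ k, t k ≤ 1) (hM1 : 0 ≤ M 1)
    (hM : ∀ k, 1 ≤ k → M (k + 1) ≤ (1 - t k) * M k) {k : ℕ} (hk : 1 ≤ k) :
    M k ≤ Real.exp (-∑ j ∈ Ico 1 k, t j) * M 1 := by
  induction k, hk using Nat.le_induction with
  | base => simp
  | succ k hk ih =>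
    calc M (k + 1) ≤ (1 - t k) * M k := hM k hk
      _ ≤ (1 - t k) * (Real.exp (-∑ j ∈ Ico 1 k, t j) * M 1) :=
        mul_le_mul_of_nonneg_left ih (by linarith [ht k])
      _ ≤ Real.exp (-t k) * (Real.exp (-∑ j ∈ Ico 1 k, t j) * M 1) :=
        mul_le_mul_of_nonneg_right (by linarith [Real.add_one_le_exp (-t k)]) (by positivity)
      _ = Real.exp (-∑ j ∈ Ico 1 (k + 1), t j) * M 1 := by
        rw [sum_Ico_succ_top hk, neg_add, Real.exp_add]
        ring

theorem rpow_one_sub_sub_one_div_le_sum_Ico_rpow_neg {β : ℝ} (hβ0 : 0 ≤ β) (hβ1 : β < 1) {k : ℕ}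
    (hk : 1 ≤ k) : ((k : ℝ) ^ (1 - β) - 1) / (1 - β) ≤ ∑ j ∈ Ico 1 k, (j : ℝ) ^ (-β) := by
  have hanti : AntitoneOn (fun y : ℝ => y ^ (-β)) (Set.Icc (1 : ℕ) k) := fun u hu v _ huv =>
    Real.rpow_le_rpow_of_nonpos (by simp at hu; linarith [hu.1]) huv (by linarith)
  have := hanti.integral_le_sum_Ico hk
  rwa [integral_rpow (Or.inl (by linarith)), Nat.cast_one, Real.one_rpow,
    show -β + 1 = 1 - β by ring] at this

theorem exists_le_sum_Ico_min_rpow {α₀ β c : ℝ} (hα₀ : 0 ≤ α₀) (hβ0 : 0 < β) (hβ1 : β < 1)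
    (hc : 0 < c) : ∃ D, ∀ k : ℕ, 1 ≤ k →
      α₀ / (1 - β) * (k : ℝ) ^ (1 - β) - D ≤ ∑ j ∈ Ico 1 k, min (α₀ * (j : ℝ) ^ (-β)) c := by
  obtain ⟨N, hN⟩ : ∃ N : ℕ, ∀ j ≥ N, α₀ * (j : ℝ) ^ (-β) ≤ c := by
    have := ((tendsto_rpow_neg_atTop hβ0).comp tendsto_natCast_atTop_atTop).const_mul α₀
    rw [mul_zero] at this
    exact Filter.eventually_atTop.1 (this.eventually (ge_mem_nhds hc))
  refine ⟨α₀ / (1 - β) + α₀ * N, fun k hk => ?_⟩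
  have hterm : ∀ j ∈ Ico 1 k,
      α₀ * (j : ℝ) ^ (-β) - (if j < N then α₀ else 0) ≤ min (α₀ * (j : ℝ) ^ (-β)) c := by
    intro j hj
    have hj1 : (1 : ℝ) ≤ j := by exact_mod_cast (mem_Ico.1 hj).1
    split_ifs with hjN
    · have : (j : ℝ) ^ (-β) ≤ 1 := Real.rpow_le_one_of_one_le_of_nonpos hj1 (by linarith)
      exact le_min (by linarith) (by nlinarith)
    · rw [sub_zero, min_eq_left (hN j (not_lt.1 hjN))]
  have hcount : ∑ j ∈ Ico 1 k, (if j < N then α₀ else 0) ≤ α₀ * N := by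
    rw [← sum_filter, sum_const, nsmul_eq_mul, mul_comm]
    gcongr
    calc #{j ∈ Ico 1 k | j < N} ≤ #(range N) :=
          card_le_card fun j hj => by simp only [mem_filter, mem_range] at hj ⊢; exact hj.2
      _ = N := card_range N
  have hsum := rpow_one_sub_sub_one_div_le_sum_Ico_rpow_neg hβ0.le hβ1 hk
  have hlower := sum_le_sum hterm
  rw [sum_sub_distrib, ← mul_sum] at hlower
  have h1 := mul_le_mul_of_nonneg_left hsum hα₀
  have h2 : α₀ * (((k : ℝ) ^ (1 - β) - 1) / (1 - β)) =
      α₀ / (1 - β) * (k : ℝ) ^ (1 - β) - α₀ / (1 - β) := by ring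
  linarith

end RealSequences

theorem stmt14_general {n m : ℕ} (hnm : m < n) (hm : 0 < m)
    (a : Fin m → EuclideanSpace ℝ (Fin n)) (b : Fin m → ℝ)
    (hrownorm : ∀ i, ‖a i‖ = Real.sqrt n)
    (hsigma : ∀ v ∈ Submodule.span ℝ (Set.range a),
      (m : ℝ) * ‖v‖ ^ 2 ≤ ∑ i, ⟪a i, v⟫ ^ 2)
    (xstar : EuclideanSpace ℝ (Fin n))
    (hxstar_span : xstar ∈ Submodule.span ℝ (Set.range a))
    (hinterp : ∀ i, ⟪a i, xstar⟫ = b i)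
    {Ω : Type*} [MeasurableSpace Ω] (μ : Measure Ω) [IsProbabilityMeasure μ]
    (I : ℕ → Ω → Fin m) (hImeas : ∀ k, Measurable (I k))
    (hIindep : iIndepFun I μ)
    (hIunif : ∀ k j, μ {ω | I k ω = j} = (m : ℝ≥0∞)⁻¹)
    (α₀ β : ℝ) (hα₀ : 0 < α₀) (hβ : β ∈ Set.Ioo (0 : ℝ) 1)
    (α : ℕ → ℝ) (hα : ∀ k : ℕ, α k = α₀ * (k : ℝ) ^ (-β))
    (x₁ : EuclideanSpace ℝ (Fin n)) (hx₁span : x₁ ∈ Submodule.span ℝ (Set.range a))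
    (x : ℕ → Ω → EuclideanSpace ℝ (Fin n))
    (hxinit : ∀ ω, x 1 ω = x₁)
    (hupdate : ∀ k, 1 ≤ k → ∀ ω,
      x (k + 1) ω = x k ω -
        (min (α k)
            ((1 / 2) * (⟪a (I k ω), x k ω⟫ - b (I k ω)) ^ 2 /
              ‖(⟪a (I k ω), x k ω⟫ - b (I k ω)) • a (I k ω)‖ ^ 2)) •
          ((⟪a (I k ω), x k ω⟫ - b (I k ω)) • a (I k ω))) :
    ∃ C : ℝ, ∀ k, 1 ≤ k →
      (∫ ω, ‖x k ω - xstar‖ ^ 2 ∂μ) ≤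
        C * max (Real.exp (-(k : ℝ) / m))
            (Real.exp (-(α₀ / (1 - β)) * (k : ℝ) ^ (1 - β))) *
          ‖x₁ - xstar‖ ^ 2 := by
  obtain ⟨hβ0, hβ1⟩ := hβ
  have hn : (1 : ℝ) ≤ n := Nat.one_le_cast.2 (hm.trans hnm)
  have hα0 : ∀ k, 0 ≤ α k := fun k => by rw [hα]; positivity
  set t : ℕ → ℝ := fun k => min (α k) (1 / (2 * n))
  have hta : ∀ k i, t k * ‖a i‖ ^ 2 ≤ 1 / 2 := fun k i => by
    rw [hrownorm, Real.sq_sqrt (by positivity)]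
    exact (mul_le_mul_of_nonneg_right (min_le_right _ _) (by positivity)).trans_eq (by field_simp)
  have hrec : ∀ k, 1 ≤ k → ∫ ω, ‖x (k + 1) ω - xstar‖ ^ 2 ∂μ ≤
      (1 - t k) * ∫ ω, ‖x k ω - xstar‖ ^ 2 ∂μ := fun k hk =>
    integral_norm_truncatedStep_iterate_sub_sq_le hm hinterp hxstar_span hsigma hImeas hIindep
      (hIunif k) hα0 (le_min (hα0 k) (by positivity)) (min_le_left _ _) (hta k) hx₁span hxinit
      hupdate hk
  have ht1 : ∀ k, t k ≤ 1 := fun k =>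
    (min_le_right _ _).trans ((div_le_one (by positivity)).2 (by linarith))
  obtain ⟨D, hD⟩ := exists_le_sum_Ico_min_rpow (c := 1 / (2 * n)) hα₀.le hβ0 hβ1 (by positivity)
  refine ⟨Real.exp D, fun k hk => ?_⟩
  have hM := le_exp_neg_sum_mul_of_le_one_sub_mul (M := fun k => ∫ ω, ‖x k ω - xstar‖ ^ 2 ∂μ)
    ht1 (integral_nonneg fun _ => by positivity) hrec hk
  simp only [hxinit, integral_const, probReal_univ, one_smul, t, hα] at hM
  calc ∫ ω, ‖x k ω - xstar‖ ^ 2 ∂μ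
      ≤ Real.exp (-∑ j ∈ Finset.Ico 1 k, min (α₀ * (j : ℝ) ^ (-β)) (1 / (2 * n))) *
          ‖x₁ - xstar‖ ^ 2 := hM
    _ ≤ Real.exp D * Real.exp (-(α₀ / (1 - β)) * (k : ℝ) ^ (1 - β)) * ‖x₁ - xstar‖ ^ 2 := by
        rw [← Real.exp_add]
        gcongr
        linarith [hD k hk]
    _ ≤ _ := by gcongr; exact le_max_right _ _

/-- Corollary 4.6 (interpolation / underdetermined least squares): for a feasible linear
system `⟨a_i, x⟩ = b_i` (`n > m`) with rows of norm `√n` and `m`-th singular value at least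
`√m` (expressed as `‖Av‖² ≥ m‖v‖²` on the row span), the aProx iteration with the truncated
model for `f_i(x) = ½(⟨a_i,x⟩ - b_i)²`, a uniformly random index at each step, stepsizes
`α_k = α₀ k^{-β}` with `β ∈ (0,1)`, and `x₁` in the row span, satisfies
`E‖x_k - x*‖² ≤ C max{e^{-k/m}, e^{-(α₀/(1-β)) k^{1-β}}} ‖x₁ - x*‖²` for a constant `C`
depending only on `n, m, α₀, β`, where `x*` is the minimum-norm interpolant. -/
theorem stmt14 {n m : ℕ} (hnm : m < n) (hm : 0 < m)
    (a : Fin m → EuclideanSpace ℝ (Fin n)) (b : Fin m → ℝ)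
    (hrownorm : ∀ i, ‖a i‖ = Real.sqrt n)
    (hsigma : ∀ v ∈ Submodule.span ℝ (Set.range a),
      (m : ℝ) * ‖v‖ ^ 2 ≤ ∑ i, ⟪a i, v⟫ ^ 2)
    (xstar : EuclideanSpace ℝ (Fin n))
    (hxstar_span : xstar ∈ Submodule.span ℝ (Set.range a))
    (hinterp : ∀ i, ⟪a i, xstar⟫ = b i)
    {Ω : Type*} [MeasurableSpace Ω] (μ : Measure Ω) [IsProbabilityMeasure μ]
    (I : ℕ → Ω → Fin m) (hImeas : ∀ k, Measurable (I k))
    (hIindep : iIndepFun I μ)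
    (hIunif : ∀ k j, μ {ω | I k ω = j} = (m : ℝ≥0∞)⁻¹)
    (α₀ β : ℝ) (hα₀ : 0 < α₀) (hβ : β ∈ Set.Ioo (0 : ℝ) 1)
    (α : ℕ → ℝ) (hα : ∀ k : ℕ, α k = α₀ * (k : ℝ) ^ (-β))
    (x₁ : EuclideanSpace ℝ (Fin n)) (hx₁span : x₁ ∈ Submodule.span ℝ (Set.range a))
    (x : ℕ → Ω → EuclideanSpace ℝ (Fin n))
    (hxmeas : ∀ k, Measurable (x k))
    (hxinit : ∀ ω, x 1 ω = x₁)
    (hupdate : ∀ k, 1 ≤ k → ∀ ω,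
      x (k + 1) ω = x k ω -
        (min (α k)
            ((1 / 2) * (⟪a (I k ω), x k ω⟫ - b (I k ω)) ^ 2 /
              ‖(⟪a (I k ω), x k ω⟫ - b (I k ω)) • a (I k ω)‖ ^ 2)) •
          ((⟪a (I k ω), x k ω⟫ - b (I k ω)) • a (I k ω))) :
    ∃ C : ℝ, ∀ k, 1 ≤ k →
      (∫ ω, ‖x k ω - xstar‖ ^ 2 ∂μ) ≤
        C * max (Real.exp (-(k : ℝ) / m))
            (Real.exp (-(α₀ / (1 - β)) * (k : ℝ) ^ (1 - β))) *
          ‖x₁ - xstar‖ ^ 2 :=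
  stmt14_general hnm hm a b hrownorm hsigma xstar hxstar_span hinterp μ I hImeas hIindep hIunif α₀ β
    hα₀ hβ α hα x₁ hx₁span x hxinit hupdate
end
end
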